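/- Let k ≥ 2 be an integer and let G = (k/(k+1), (k−1)/(k+1), …, 1/(k+1)) ∈ ℝ^k be the centroid of the fundamental alcove of type C_k. Then (w_1 ∘ w_2 ∘ ⋯ ∘ w_k)(G) = G + (1, 1, …, 1). (This expresses that the pseudo-translation z_{Λ_k^∨} in the affine Weyl group of type C_k^{(1)} equals w_k^{-1} w_{k-1}^{-1} ⋯ w_1^{-1}, i.e., that w_1 w_2 ⋯ w_k carries the fundamental alcove to its translate by the fundamental coweight Λ_k^∨ = (1, …, 1).) -/
import Mathlib


/-- The level-one (affine) action of the simple generator `s i` of the affine Weyl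
group of type `C_k^{(1)}` on `ℝ^k` (coordinates are `0`-indexed, so the `1`-indexed
coordinate `a_m` of the paper is `a ⟨m-1, _⟩`):
`σ_0` sends `a_1 ↦ 2 - a_1`, `σ_i` (for `1 ≤ i ≤ k-1`) swaps `a_i` and `a_{i+1}`,
and `σ_k` sends `a_k ↦ -a_k`. -/
noncomputable def sigmaC (k : ℕ) (i : ℕ) (a : Fin k → ℝ) : Fin k → ℝ := fun t =>
  if i = 0 then (if (t : ℕ) = 0 then 2 - a t else a t)
  else if i = k then (if (t : ℕ) = k - 1 then -(a t) else a t)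
  else if hik : i < k then
    (if (t : ℕ) = i - 1 then a ⟨i, hik⟩
     else if (t : ℕ) = i then a ⟨i - 1, by omega⟩
     else a t)
  else a t

/-- `wC k i = σ_{i-1} ∘ σ_{i-2} ∘ ⋯ ∘ σ_1 ∘ σ_0` (the rightmost factor applied first). -/
noncomputable def wC (k i : ℕ) (a : Fin k → ℝ) : Fin k → ℝ :=
  (List.range i).foldl (fun b m => sigmaC k m b) a



lemma wC_succ (k i : ℕ) (a : Fin k → ℝ) :
    wC k (i + 1) a = sigmaC k i (wC k i a) := by
  simp [wC, List.range_succ]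

lemma wC_apply (k : ℕ) : ∀ i, ∀ (hi : 1 ≤ i) (hik : i ≤ k) (a : Fin k → ℝ),
    wC k i a = fun t : Fin k =>
      if h : (t : ℕ) + 1 < i then a ⟨(t : ℕ) + 1, by omega⟩
      else if (t : ℕ) + 1 = i then 2 - a ⟨0, by omega⟩
      else a t := by
  intro i
  induction i with
  | zero => omega
  | succ i ih =>
    intro hi hik a
    rcases Nat.eq_zero_or_pos i with hi0 | hi1
    · subst hi0
      have hw : wC k 1 a = sigmaC k 0 a := by rw [wC_succ]; simp [wC]
      rw [hw]
      funext t
      rcases Nat.eq_zero_or_pos (t : ℕ) with ht | ht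
      · have ht' : t = ⟨0, by omega⟩ := Fin.val_injective (by simpa using ht)
        rw [ht']
        simp [sigmaC]
      · have h1 : ¬ ((t : ℕ) = 0) := by omega
        have h2 : ¬ ((t : ℕ) + 1 < 1) := by omega
        have h3 : ¬ ((t : ℕ) + 1 = 1) := by omega
        simp [sigmaC, h1, h2, h3]
    · rw [wC_succ, ih hi1 (by omega)]
      funext t
      have hi0 : i ≠ 0 := by omega
      have hik' : i ≠ k := by omega
      have hilt : i < k := by omega
      simp only [sigmaC, if_neg hi0, if_neg hik', dif_pos hilt]
      by_cases h1 : (t : ℕ) = i - 1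
      · have h2 : ¬ ((i : ℕ) + 1 < i) := by omega
        have h3 : ¬ ((i : ℕ) + 1 = i) := by omega
        have h4 : (t : ℕ) + 1 < i + 1 := by omega
        have h5 : (t : ℕ) + 1 = i := by omega
        rw [if_pos h1, dif_neg (by simpa using h2), if_neg (by simpa using h3),
          dif_pos h4]
        exact congrArg a (Fin.val_injective (by simp [h5.symm]))
      · by_cases h2 : (t : ℕ) = i
        · have h3 : ¬ ((i - 1) + 1 < i) := by omega
          have h4 : (i - 1) + 1 = i := by omega
          have h5 : ¬ ((t : ℕ) + 1 < i + 1) := by omega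
          have h6 : (t : ℕ) + 1 = i + 1 := by omega
          rw [if_neg h1, if_pos h2, dif_neg (by simpa using h3),
            if_pos (by simpa using h4), dif_neg h5, if_pos h6]
        · have h5 : ((t : ℕ) + 1 < i + 1) ↔ ((t : ℕ) + 1 < i) := by omega
          have h6 : ¬ ((t : ℕ) + 1 = i) := by omega
          have h7 : ¬ ((t : ℕ) + 1 = i + 1) := by omega
          rw [if_neg h1, if_neg h2]
          by_cases h8 : (t : ℕ) + 1 < i
          · rw [dif_pos (by omega : (t : ℕ) + 1 < i + 1), dif_pos h8]
          · rw [dif_neg (by omega : ¬ ((t : ℕ) + 1 < i + 1)), if_neg h7,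
              dif_neg h8, if_neg h6]

/-- The intermediate state. -/
noncomputable def SC (k j : ℕ) : Fin k → ℝ := fun t =>
  if (t : ℕ) < j then ((j : ℝ) - (t : ℕ)) / ((k : ℝ) + 1)
  else ((k : ℝ) - (t : ℕ)) / ((k : ℝ) + 1) + 1

lemma step (k j : ℕ) (hj : j < k) : wC k (j + 1) (SC k (j + 1)) = SC k j := by
  rw [wC_apply k (j + 1) (by omega) (by omega)]
  funext t
  have hk1 : (k : ℝ) + 1 ≠ 0 := by positivity
  by_cases h1 : (t : ℕ) + 1 < j + 1
  · rw [dif_pos h1]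
    have h2 : (t : ℕ) < j := by omega
    simp only [SC, if_pos (show (t : ℕ) + 1 < j + 1 from h1), if_pos h2]
    push_cast
    ring
  · rw [dif_neg h1]
    by_cases h2 : (t : ℕ) + 1 = j + 1
    · rw [if_pos h2]
      have h3 : ¬ ((t : ℕ) < j) := by omega
      have h4 : (0 : ℕ) < j + 1 := by omega
      simp only [SC, if_pos h4, if_neg h3]
      have h5 : ((t : ℕ) : ℝ) = (j : ℕ) := by exact_mod_cast (by omega : (t:ℕ) = j)
      rw [h5]
      field_simp
      push_cast
      ring
    · rw [if_neg h2]
      have h3 : ¬ ((t : ℕ) < j + 1) := by omega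
      have h4 : ¬ ((t : ℕ) < j) := by omega
      simp only [SC, if_neg h3, if_neg h4]

lemma fold_lemma (k : ℕ) : ∀ j, j ≤ k →
    (List.range j).reverse.foldl (fun b m => wC k (m + 1) b) (SC k j) = SC k 0 := by
  intro j
  induction j with
  | zero => simp
  | succ j ih =>
    intro hjk
    rw [List.range_succ, List.reverse_append, List.reverse_singleton,
      List.singleton_append, List.foldl_cons, step k j (by omega)]
    exact ih (by omega)

/-- With `G = (k/(k+1), (k-1)/(k+1), …, 1/(k+1))` the centroid of the fundamental alcove,
`(w_1 ∘ w_2 ∘ ⋯ ∘ w_k)(G) = G + (1, 1, …, 1)`.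
(The fold is over `[k-1, …, 1, 0]`, so `w_k` is applied first and `w_1` last.) -/
theorem stmt4 (k : ℕ) (hk : 2 ≤ k) :
    (List.range k).reverse.foldl (fun b m => wC k (m + 1) b)
        (fun t : Fin k => ((k : ℝ) - (t : ℕ)) / ((k : ℝ) + 1))
      = fun t : Fin k => ((k : ℝ) - (t : ℕ)) / ((k : ℝ) + 1) + 1 := by
  have h1 : (fun t : Fin k => ((k : ℝ) - (t : ℕ)) / ((k : ℝ) + 1)) = SC k k := by
    funext t
    simp [SC, t.isLt]
  have h2 : SC k 0 = fun t : Fin k => ((k : ℝ) - (t : ℕ)) / ((k : ℝ) + 1) + 1 := by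
    funext t
    simp [SC]
  rw [h1, fold_lemma k k le_rfl, h2]
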